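/- arXiv:1505.00720 — 2 statements merged into one kernel-verified Lean document; each statement's English description precedes it below -/
import Mathlib

section
/- Suppose for all b₄ > b₃ > b₂ > b₁ in B the strict incremental-cost inequality ICC(b₄, b₃) > ICC(b₂, b₁) holds, where ICC(b₂, b₁) = (ΔC(b₂) − ΔC(b₁))/(ΔP(b₂) − ΔP(b₁)). Then for every v ∈ ℝ the set of maximizers of b ↦ v·ΔP(b) − ΔC(b) over B is a singleton. -/
theorem maximizer_unique_under_ICC (b₀ : ℝ) (hb₀ : 0 ≤ b₀) (ΔP ΔC : ℝ → ℝ)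
    (hPc : ContinuousOn ΔP (Set.Icc 0 b₀)) (hCc : ContinuousOn ΔC (Set.Icc 0 b₀))
    (hPm : StrictMonoOn ΔP (Set.Icc 0 b₀)) (hCm : StrictMonoOn ΔC (Set.Icc 0 b₀))
    (hICC : ∀ b₁ b₂ b₃ b₄ : ℝ, b₁ ∈ Set.Icc (0:ℝ) b₀ → b₂ ∈ Set.Icc (0:ℝ) b₀ →
      b₃ ∈ Set.Icc (0:ℝ) b₀ → b₄ ∈ Set.Icc (0:ℝ) b₀ → b₁ < b₂ → b₂ < b₃ → b₃ < b₄ →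
      (ΔC b₄ - ΔC b₃) / (ΔP b₄ - ΔP b₃) > (ΔC b₂ - ΔC b₁) / (ΔP b₂ - ΔP b₁))
    (v : ℝ) :
    ∃ bs, {b | b ∈ Set.Icc (0:ℝ) b₀ ∧
      IsMaxOn (fun b => v * ΔP b - ΔC b) (Set.Icc 0 b₀) b} = {bs} := by
  set f : ℝ → ℝ := fun b => v * ΔP b - ΔC b with hf
  have hfc : ContinuousOn f (Set.Icc 0 b₀) :=
    ((continuousOn_const.mul hPc).sub hCc)
  obtain ⟨bs, hbs, hmax⟩ := (isCompact_Icc).exists_isMaxOn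
    (Set.nonempty_Icc.mpr hb₀) hfc
  refine ⟨bs, ?_⟩
  -- uniqueness: any two maximizers are equal
  have key : ∀ a b : ℝ, a ∈ Set.Icc (0:ℝ) b₀ → b ∈ Set.Icc (0:ℝ) b₀ →
      IsMaxOn f (Set.Icc 0 b₀) a → IsMaxOn f (Set.Icc 0 b₀) b → a < b → False := by
    intro a b ha hb hma hmb hab
    set p := a + (b - a) / 3 with hp
    set q := a + 2 * (b - a) / 3 with hq
    have hap : a < p := by simp [hp]; linarith
    have hpq : p < q := by simp [hp, hq]; linarith
    have hqb : q < b := by simp [hq]; linarith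
    have hpmem : p ∈ Set.Icc (0:ℝ) b₀ :=
      ⟨le_trans ha.1 hap.le, le_trans hqb.le hb.2 |>.trans' (le_trans hpq.le le_rfl)⟩
    have hqmem : q ∈ Set.Icc (0:ℝ) b₀ :=
      ⟨le_trans ha.1 (hap.trans hpq).le, le_trans hqb.le hb.2⟩
    have hPa : (0:ℝ) < ΔP p - ΔP a := sub_pos.mpr (hPm ha hpmem hap)
    have hPq : (0:ℝ) < ΔP b - ΔP q := sub_pos.mpr (hPm hqmem hb hqb)
    have h1 : f p ≤ f a := hma hpmem
    have h2 : f q ≤ f b := hmb hqmem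
    have hv1 : v ≤ (ΔC p - ΔC a) / (ΔP p - ΔP a) := by
      rw [le_div_iff₀ hPa]
      simp only [hf] at h1
      nlinarith
    have hv2 : (ΔC b - ΔC q) / (ΔP b - ΔP q) ≤ v := by
      rw [div_le_iff₀ hPq]
      simp only [hf] at h2
      nlinarith
    have := hICC a p q b ha hpmem hqmem hb hap hpq hqb
    linarith
  ext x
  simp only [Set.mem_setOf_eq, Set.mem_singleton_iff]
  constructor
  · rintro ⟨hx, hmx⟩
    rcases lt_trichotomy x bs with h | h | h
    · exact absurd (key x bs hx hbs hmx hmax h) id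
    · exact h
    · exact absurd (key bs x hbs hx hmax hmx h) id
  · rintro rfl
    exact ⟨hbs, hmax⟩
end

section
/- For u = (u₁, u₂) with u₂ < 0 and u₁/|u₂| = ΔP(b₀) for some b₀ ∈ B at which the supremum of v·ΔP(b) − ΔC(b) is attained appropriately, the support function of NR satisfies h(NR, u) = |u₂|·ΔC(ΔP⁻¹(u₁/|u₂|)); i.e., at the boundary point (v, ε) with ε = v·ΔP(b*(v)) − ΔC(b*(v)) and b*(v) = b₀, one has u₁v + u₂ε = |u₂|·ΔC(b₀). -/
theorem support_function_formula (b₀bar : ℝ) (hb₀bar : 0 ≤ b₀bar) (ΔP ΔC : ℝ → ℝ)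
    (hPc : ContinuousOn ΔP (Set.Icc 0 b₀bar)) (hCc : ContinuousOn ΔC (Set.Icc 0 b₀bar))
    (hPm : StrictMonoOn ΔP (Set.Icc 0 b₀bar)) (hCm : StrictMonoOn ΔC (Set.Icc 0 b₀bar))
    (hICC : ∀ b₁ b₂ b₃ b₄ : ℝ, b₁ ∈ Set.Icc (0:ℝ) b₀bar → b₂ ∈ Set.Icc (0:ℝ) b₀bar →
      b₃ ∈ Set.Icc (0:ℝ) b₀bar → b₄ ∈ Set.Icc (0:ℝ) b₀bar → b₁ < b₂ → b₂ < b₃ → b₃ < b₄ →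
      (ΔC b₄ - ΔC b₃) / (ΔP b₄ - ΔP b₃) > (ΔC b₂ - ΔC b₁) / (ΔP b₂ - ΔP b₁))
    (NR : Set (ℝ × ℝ))
    (hNR : NR = {p : ℝ × ℝ | ∀ b ∈ Set.Icc (0:ℝ) b₀bar, p.1 * ΔP b - ΔC b ≤ p.2})
    (u₁ u₂ : ℝ) (hu₂ : u₂ < 0) (v ε bo : ℝ) (hbo : bo ∈ Set.Icc (0:ℝ) b₀bar)
    (hdir : u₁ / |u₂| = ΔP bo)
    (hmax : IsMaxOn (fun b => v * ΔP b - ΔC b) (Set.Icc 0 b₀bar) bo)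
    (hε : ε = v * ΔP bo - ΔC bo) :
    u₁ * v + u₂ * ε = |u₂| * ΔC bo ∧
    sSup ((fun p : ℝ × ℝ => u₁ * p.1 + u₂ * p.2) '' NR) = |u₂| * ΔC bo := by
  have habs : |u₂| = -u₂ := abs_of_neg hu₂
  have hne : |u₂| ≠ 0 := ne_of_gt (abs_pos.mpr hu₂.ne)
  have hu1 : u₁ = -u₂ * ΔP bo := by
    field_simp at hdir
    rw [hdir, habs]
  have part1 : u₁ * v + u₂ * ε = |u₂| * ΔC bo := by
    rw [hu1, hε, habs]; ring
  refine ⟨part1, ?_⟩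
  have hmem : (v, ε) ∈ NR := by
    rw [hNR]
    intro b hb
    have := hmax hb
    simp only [Set.mem_setOf_eq] at this ⊢
    linarith [this]
  have hgr : IsGreatest ((fun p : ℝ × ℝ => u₁ * p.1 + u₂ * p.2) '' NR) (|u₂| * ΔC bo) := by
    constructor
    · exact ⟨(v, ε), hmem, part1⟩
    · rintro y ⟨p, hp, rfl⟩
      rw [hNR] at hp
      have h := hp bo hbo
      have h2 := mul_le_mul_of_nonpos_left h hu₂.le
      rw [hu1, habs]
      dsimp only
      nlinarith [h2]
  exact hgr.csSup_eq
end
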